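/- Let F be a minimal 2-edge-connected spanning multi-subgraph containing two parallel copies of an edge uv. Then uv is a bridge of the simple graph underlying F (the simplification of (V,F)). -/

import Mathlib

/-!
Removing one copy of `uv` destroys 2-edge-connectivity, so some cut `S` crossed by `uv` has
weight at most `2`. Since `uv` alone already contributes `2` to that cut, no other edge of the
support crosses `S`, and `S` separates `u` from `v` once `uv` is deleted.
-/

open Finset

attribute [local instance] Classical.propDecidable

/-- An (unordered) edge `e` crosses the vertex set `S`. -/
def crosses {V : Type*} (e : Sym2 V) (S : Finset V) : Prop :=
  ∃ a b : V, e = s(a, b) ∧ a ∈ S ∧ b ∉ S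

/-- A multiset of edges (given by multiplicities `m`) is 2-edge-connected. -/
def TwoEC {V : Type*} [Fintype V] (m : Sym2 V → ℕ) : Prop :=
  ∀ S : Finset V, S.Nonempty → S ≠ Finset.univ →
    2 ≤ ∑ e ∈ Finset.univ.filter (fun e => crosses e S), m e

section Cuts

variable {V : Type*}

lemma crosses_mk_iff {a b : V} {S : Finset V} :
    crosses s(a, b) S ↔ (a ∈ S ∧ b ∉ S) ∨ (b ∈ S ∧ a ∉ S) := by
  constructor
  · rintro ⟨x, y, hxy, hx, hy⟩
    rcases Sym2.eq_iff.mp hxy with ⟨rfl, rfl⟩ | ⟨rfl, rfl⟩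
    exacts [Or.inl ⟨hx, hy⟩, Or.inr ⟨hx, hy⟩]
  · rintro (⟨ha, hb⟩ | ⟨hb, ha⟩)
    exacts [⟨a, b, rfl, ha, hb⟩, ⟨b, a, Sym2.eq_swap, hb, ha⟩]

variable [Fintype V]

noncomputable def cutWeight (m : Sym2 V → ℕ) (S : Finset V) : ℕ :=
  ∑ e ∈ univ.filter (fun e => crosses e S), m e

lemma exists_crosses_cutWeight_le_two [DecidableEq V] {m : Sym2 V → ℕ} {e : Sym2 V}
    (hec : TwoEC m) (hdel : ¬ TwoEC (Function.update m e (m e - 1))) :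
    ∃ S : Finset V, crosses e S ∧ cutWeight m S ≤ 2 := by
  simp only [TwoEC, not_forall, not_le] at hdel
  obtain ⟨S, hSne, hSuniv, hlt⟩ := hdel
  have hge : 2 ≤ cutWeight m S := hec S hSne hSuniv
  by_cases he : e ∈ univ.filter (fun e => crosses e S)
  · refine ⟨S, (mem_filter.mp he).2, ?_⟩
    rw [sum_update_of_mem he] at hlt
    have hsplit := add_sum_erase _ m he
    rw [← sdiff_singleton_eq_erase] at hsplit
    unfold cutWeight
    omega
  · rw [sum_update_of_notMem he] at hlt
    exact absurd hge (not_le.mpr hlt)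

lemma eq_zero_of_crosses_of_cutWeight_le {m : Sym2 V → ℕ} {S : Finset V} {e f : Sym2 V}
    (hS : cutWeight m S ≤ m e) (he : crosses e S) (hf : crosses f S) (hfe : f ≠ e) :
    m f = 0 := by
  have : m e + m f ≤ cutWeight m S :=
    add_le_sum (fun _ _ => Nat.zero_le _) (mem_filter.mpr ⟨mem_univ e, he⟩)
      (mem_filter.mpr ⟨mem_univ f, hf⟩) hfe.symm
  omega

end Cuts

lemma SimpleGraph.not_reachable_of_crosses {V : Type*} {H : SimpleGraph V} {S : Finset V}
    {u v : V} (hH : ∀ a b, H.Adj a b → ¬ crosses s(a, b) S) (huv : crosses s(u, v) S) :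
    ¬ H.Reachable u v := by
  have hsep : ∀ {x y : V}, x ∈ S → y ∉ S → ¬ H.Reachable x y := by
    rintro x y hx hy ⟨p⟩
    obtain ⟨d, -, hd₁, hd₂⟩ := p.exists_boundary_dart (S : Set V) hx hy
    exact hH _ _ d.adj (crosses_mk_iff.mpr (Or.inl ⟨hd₁, hd₂⟩))
  rcases crosses_mk_iff.mp huv with ⟨hu, hv⟩ | ⟨hv, hu⟩
  · exact hsep hu hv
  · exact fun h => hsep hv hu h.symm

theorem stmt7_general {V : Type*} [Fintype V] [DecidableEq V]
    (m : Sym2 V → ℕ) (hec : TwoEC m)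
    (hmin : ∀ e : Sym2 V, 0 < m e → ¬ TwoEC (Function.update m e (m e - 1)))
    (u v : V) (hpar : 2 ≤ m s(u, v)) :
    (SimpleGraph.fromRel (fun a b => 0 < m s(a, b))).IsBridge s(u, v) := by
  obtain ⟨S, hcross, hS⟩ := exists_crosses_cutWeight_le_two hec (hmin s(u, v) (by omega))
  rw [SimpleGraph.isBridge_iff]
  refine SimpleGraph.not_reachable_of_crosses ?_ hcross
  intro a b hab hab_cross
  obtain ⟨⟨-, hpos⟩, hne⟩ := SimpleGraph.deleteEdges_adj.mp hab
  have hzero := eq_zero_of_crosses_of_cutWeight_le (hS.trans hpar) hcross hab_cross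
    (by simpa using hne)
  rcases hpos with h | h
  · omega
  · rw [Sym2.eq_swap] at hzero
    omega

/-- If a minimal 2-edge-connected spanning multi-subgraph contains two parallel copies of
an edge `uv`, then `uv` is a bridge of the underlying simple graph. -/
theorem stmt7 {V : Type*} [Fintype V] [DecidableEq V]
    (m : Sym2 V → ℕ) (hec : TwoEC m)
    (hmin : ∀ e : Sym2 V, 0 < m e → ¬ TwoEC (Function.update m e (m e - 1)))
    (u v : V) (huv : u ≠ v) (hpar : 2 ≤ m s(u, v)) :
    (SimpleGraph.fromRel (fun a b => 0 < m s(a, b))).IsBridge s(u, v) :=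
  stmt7_general m hec hmin u v hpar
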